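/- arXiv:1911.06055 — 2 statements merged into one kernel-verified Lean document; each statement's English description precedes it below -/
import Mathlib

section
/- Let r > 0, and suppose a room of capacity c with s = c mod r > 0 and another room of capacity c' with s' = c' mod r > 0 satisfy s ≤ s'. Given an available slack of S students to remove with s ≤ S < s + s', removing s students from the first room saves one proctor (⌈(c-s)/r⌉ = ⌈c/r⌉ - 1) while removing any k ≤ S students from the second room with k < s' saves none. Hence prioritizing the room with the smaller positive remainder is optimal for a single removal. -/
/-!
Write `c = q r + s` with `0 < s < r`. Then `c / r` lies in the half-open interval `(q, q + 1]`, so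
`⌈c / r⌉ = q + 1`. Removing exactly `s` students makes `c - s = q r` divisible by `r`, which lowers
the ceiling to `q`; removing `k < s` students keeps `(c - k) / r` inside `(q, q + 1]`, so the
ceiling does not move.
-/

namespace Nat

variable {K : Type*} [Semifield K] [LinearOrder K] [IsStrictOrderedRing K] [FloorSemiring K]
  {m d k : ℕ}

theorem ceil_natCast_div_eq_add_one_of_mul_lt_of_le {q : ℕ} (hd : 0 < d) (hlt : q * d < m)
    (hle : m ≤ (q + 1) * d) : ⌈(m : K) / d⌉₊ = q + 1 := by
  have hd' : (0 : K) < d := by exact_mod_cast hd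
  rw [ceil_eq_iff q.add_one_ne_zero, add_tsub_cancel_right, lt_div_iff₀ hd', div_le_iff₀ hd']
  exact ⟨by exact_mod_cast hlt, by exact_mod_cast hle⟩

theorem ceil_natCast_sub_div_eq_div_add_one_of_lt_mod (hd : 0 < d) (hk : k < m % d) :
    ⌈((m - k : ℕ) : K) / d⌉₊ = m / d + 1 := by
  have hm := div_add_mod' m d
  have hmd := lt_div_mul_add (a := m) hd
  exact ceil_natCast_div_eq_add_one_of_mul_lt_of_le hd (by omega) (by rw [add_one_mul]; omega)

theorem ceil_natCast_div_eq_div_add_one (hd : 0 < d) (hm : 0 < m % d) :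
    ⌈(m : K) / d⌉₊ = m / d + 1 := by
  simpa using ceil_natCast_sub_div_eq_div_add_one_of_lt_mod (K := K) (k := 0) hd hm

theorem ceil_natCast_sub_div_eq_of_lt_mod (hd : 0 < d) (hk : k < m % d) :
    ⌈((m - k : ℕ) : K) / d⌉₊ = ⌈(m : K) / d⌉₊ := by
  rw [ceil_natCast_sub_div_eq_div_add_one_of_lt_mod hd hk,
    ceil_natCast_div_eq_div_add_one hd (by omega)]

theorem ceil_natCast_sub_mod_div_eq_sub_one (hd : 0 < d) (hm : 0 < m % d) :
    ⌈((m - m % d : ℕ) : K) / d⌉₊ = ⌈(m : K) / d⌉₊ - 1 := by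
  rw [ceil_natCast_div_eq_div_add_one hd hm, add_tsub_cancel_right,
    ← mul_div_self_eq_mod_sub_self, cast_mul, mul_div_cancel_left₀ _ (by positivity),
    ceil_natCast]

end Nat

theorem stmt_9_general (r : ℕ) (hr : 0 < r) (c c' : ℕ)
    (s s' : ℕ) (hs : c % r = s) (hs' : c' % r = s')
    (hspos : 0 < s)
    (S : ℕ) :
    (⌈((c - s : ℕ) : ℚ) / (r : ℚ)⌉₊ = ⌈(c : ℚ) / (r : ℚ)⌉₊ - 1) ∧
    (∀ k : ℕ, k ≤ S → k < s' →
      ⌈((c' - k : ℕ) : ℚ) / (r : ℚ)⌉₊ = ⌈(c' : ℚ) / (r : ℚ)⌉₊) := by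
  subst hs hs'
  exact ⟨Nat.ceil_natCast_sub_mod_div_eq_sub_one hr hspos,
    fun _ _ hk => Nat.ceil_natCast_sub_div_eq_of_lt_mod hr hk⟩

/-- Greedy exchange argument: with remainders `0 < s ≤ s'` and slack
`s ≤ S < s + s'`, removing `s` students from the first room saves a proctor,
while removing any `k ≤ S` with `k < s'` from the second room saves none. -/
theorem stmt_9 (r : ℕ) (hr : 0 < r) (c c' : ℕ) (hc : 0 < c) (hc' : 0 < c')
    (s s' : ℕ) (hs : c % r = s) (hs' : c' % r = s')
    (hspos : 0 < s) (hs'pos : 0 < s') (hss' : s ≤ s')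
    (S : ℕ) (hS1 : s ≤ S) (hS2 : S < s + s') :
    (⌈((c - s : ℕ) : ℚ) / (r : ℚ)⌉₊ = ⌈(c : ℚ) / (r : ℚ)⌉₊ - 1) ∧
    (∀ k : ℕ, k ≤ S → k < s' →
      ⌈((c' - k : ℕ) : ℚ) / (r : ℚ)⌉₊ = ⌈(c' : ℚ) / (r : ℚ)⌉₊) :=
  stmt_9_general r hr c c' s s' hs hs' hspos S
end

section
/- Let r > 0 and c : Fin N → ℕ. If there exists a subset S of rooms with ∑_{i∈S} c i ≥ D and c i mod r = 0 for all i ∈ S, and ∑_{i∈S} c i < D + r, then choosing exactly the rooms in S and distributing students so each chosen room is filled up to a multiple of r yields a schedule using exactly ⌈D/r⌉ proctors, which is optimal. -/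
/-!
Let `T = ∑ i ∈ S, c i`. Since `r ∣ T` and `T - r < D ≤ T`, we have `⌈D / r⌉ = T / r`. Seat the
`D` students in the rooms of `S` in any way that respects the capacities. A room holding
`e i ≤ c i` students needs at most `c i / r` proctors, so the total is at most `T / r = ⌈D / r⌉`.
Conversely, `n ↦ ⌈n / r⌉` is subadditive, so no seating of `D` students needs fewer than
`⌈D / r⌉` proctors.
-/

open Finset

section Ceil

variable {K : Type*} [Field K] [LinearOrder K] [IsStrictOrderedRing K] [FloorSemiring K]

theorem Nat.ceil_natCast_div_of_dvd {m r : ℕ} (h : r ∣ m) : ⌈(m : K) / r⌉₊ = m / r := by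
  rw [← Nat.cast_div_charZero h, Nat.ceil_natCast]

theorem Nat.ceil_natCast_div_eq_of_dvd_of_lt_add {D T r : ℕ} (hT : r ∣ T) (hle : D ≤ T)
    (hlt : T < D + r) : ⌈(D : K) / r⌉₊ = T / r := by
  obtain ⟨k, rfl⟩ := hT
  have hr : 0 < r := by omega
  have hrK : (0 : K) < r := by exact_mod_cast hr
  rw [Nat.mul_div_cancel_left k hr]
  refine le_antisymm (Nat.ceil_le.2 ?_) ?_
  · rw [div_le_iff₀ hrK]
    exact_mod_cast (mul_comm r k ▸ hle : D ≤ k * r)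
  · rcases k with _ | m
    · exact Nat.zero_le _
    · rw [Nat.add_one_le_ceil_iff, lt_div_iff₀ hrK]
      have : m * r < D := by rw [mul_add_one] at hlt; rw [mul_comm]; omega
      exact_mod_cast this

theorem Nat.ceil_natCast_sum_div_le {ι : Type*} (s : Finset ι) (f : ι → ℕ) (r : ℕ) :
    ⌈((∑ i ∈ s, f i : ℕ) : K) / r⌉₊ ≤ ∑ i ∈ s, ⌈(f i : K) / r⌉₊ :=
  le_sum_of_subadditive (fun n : ℕ => ⌈(n : K) / r⌉₊) (by simp)
    (fun x y => by simpa only [Nat.cast_add, add_div] using Nat.ceil_add_le _ _) s f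

end Ceil

theorem Finset.exists_le_sum_eq_of_le_sum {ι : Type*} [DecidableEq ι] (s : Finset ι)
    (c : ι → ℕ) {D : ℕ} (hD : D ≤ ∑ i ∈ s, c i) :
    ∃ e : ι → ℕ, (∀ i, e i ≤ c i) ∧ (∀ i ∉ s, e i = 0) ∧ ∑ i ∈ s, e i = D := by
  induction s using Finset.induction_on generalizing D with
  | empty => exact ⟨0, fun _ => Nat.zero_le _, fun _ _ => rfl, by simpa [eq_comm] using hD⟩
  | insert a s ha ih =>
    rw [sum_insert ha] at hD
    obtain ⟨e, he_le, he_out, he_sum⟩ := ih (D := D - min (c a) D) (by omega)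
    refine ⟨Function.update e a (min (c a) D), fun i => ?_, fun i hi => ?_, ?_⟩
    · rcases eq_or_ne i a with rfl | hia
      · simp
      · simpa [hia] using he_le i
    · rw [mem_insert, not_or] at hi
      rw [Function.update_of_ne hi.1, he_out i hi.2]
    · rw [sum_insert ha, Function.update_self, sum_update_of_notMem ha, he_sum]
      omega

theorem stmt_15_general (N : ℕ) (r : ℕ) (c : Fin N → ℕ) (D : ℕ)
    (S : Finset (Fin N)) (hcov : D ≤ ∑ i ∈ S, c i)
    (hdvd : ∀ i ∈ S, r ∣ c i) (htight : ∑ i ∈ S, c i < D + r) :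
    ∃ e : Fin N → ℕ,
      (∀ i ∈ S, e i ≤ c i) ∧ (∀ i ∉ S, e i = 0) ∧
      (∑ i ∈ S, e i = D) ∧
      (∑ i ∈ S, ⌈((e i : ℚ)) / (r : ℚ)⌉₊ = ⌈(D : ℚ) / (r : ℚ)⌉₊) ∧
      (∀ e' : Fin N → ℕ, (∑ i, e' i = D) →
        ∑ i ∈ S, ⌈((e i : ℚ)) / (r : ℚ)⌉₊ ≤ ∑ i, ⌈((e' i : ℚ)) / (r : ℚ)⌉₊) := by
  obtain ⟨e, he_le, he_out, he_sum⟩ := S.exists_le_sum_eq_of_le_sum c hcov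
  have hupper : ∑ i ∈ S, ⌈(e i : ℚ) / r⌉₊ ≤ ⌈(D : ℚ) / r⌉₊ := by
    rw [Nat.ceil_natCast_div_eq_of_dvd_of_lt_add (dvd_sum hdvd) hcov htight, Nat.sum_div hdvd]
    refine sum_le_sum fun i hi => ?_
    rw [← Nat.ceil_natCast_div_of_dvd (K := ℚ) (hdvd i hi)]
    gcongr
    exact he_le i
  have hexact : ∑ i ∈ S, ⌈(e i : ℚ) / r⌉₊ = ⌈(D : ℚ) / r⌉₊ :=
    le_antisymm hupper (he_sum ▸ Nat.ceil_natCast_sum_div_le S e r)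
  refine ⟨e, fun i _ => he_le i, he_out, he_sum, hexact, fun e' he' => ?_⟩
  rw [hexact, ← he']
  exact Nat.ceil_natCast_sum_div_le _ e' r

/-- If a subset `S` of rooms has total capacity covering `D` and within `r`
of it, with all capacities in `S` divisible by `r`, then filling the chosen
rooms suitably uses exactly `⌈D / r⌉` proctors, which is optimal among all
ways to seat the `D` students. -/
theorem stmt_15 (N : ℕ) (r : ℕ) (hr : 0 < r) (c : Fin N → ℕ) (D : ℕ)
    (S : Finset (Fin N)) (hcov : D ≤ ∑ i ∈ S, c i)
    (hdvd : ∀ i ∈ S, r ∣ c i) (htight : ∑ i ∈ S, c i < D + r) :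
    ∃ e : Fin N → ℕ,
      (∀ i ∈ S, e i ≤ c i) ∧ (∀ i ∉ S, e i = 0) ∧
      (∑ i ∈ S, e i = D) ∧
      (∑ i ∈ S, ⌈((e i : ℚ)) / (r : ℚ)⌉₊ = ⌈(D : ℚ) / (r : ℚ)⌉₊) ∧
      (∀ e' : Fin N → ℕ, (∑ i, e' i = D) →
        ∑ i ∈ S, ⌈((e i : ℚ)) / (r : ℚ)⌉₊ ≤ ∑ i, ⌈((e' i : ℚ)) / (r : ℚ)⌉₊) :=
  stmt_15_general N r c D S hcov hdvd htight
end
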